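/- arXiv:2508.20071 — 3 statements merged into one kernel-verified Lean document; each statement's English description precedes it below -/
import Mathlib

section
/- Let r : ℝⁿ → ℝ be differentiable with M-Hölder continuous gradient of exponent β ∈ (0,1], and define the forward-difference approximation g_r(x,λ) with components (r(x + λ e_i) - r(x))/λ for λ > 0. Then ‖∇r(x) - g_r(x,λ)‖ ≤ (√n · M/(β+1))·λ^β for all x ∈ ℝⁿ. -/
/-!
Along the segment `t ↦ x + t • v`, the Taylor remainder `r (x + t • v) - r x - t * ⟪∇r x, v⟫`
has derivative `⟪∇r (x + t • v) - ∇r x, v⟫`, which Hölder continuity bounds by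
`M * t ^ β * ‖v‖ ^ (β + 1)`; comparing with its primitive (a mean-value fencing argument, no
integration) gives `|r (x + v) - r x - ⟪∇r x, v⟫| ≤ M / (β + 1) * ‖v‖ ^ (β + 1)`.
With `v = λ eᵢ` this bounds every coordinate of `∇r x - g_r(x, λ)` by `M / (β + 1) * λ ^ β`,
and the `n` coordinates contribute the factor `√n`.
-/

open RealInnerProductSpace Set

theorem EuclideanSpace.norm_le_sqrt_card_mul_of_forall_abs_le {ι : Type*} [Fintype ι]
    {w : EuclideanSpace ℝ ι} {c : ℝ} (hc : 0 ≤ c) (h : ∀ i, |w i| ≤ c) :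
    ‖w‖ ≤ √(Fintype.card ι) * c := by
  rw [EuclideanSpace.norm_eq, ← Real.sqrt_sq hc, ← Real.sqrt_mul (Nat.cast_nonneg _)]
  gcongr
  calc ∑ i, ‖w i‖ ^ 2 ≤ ∑ _i : ι, c ^ 2 := by
        gcongr with i
        exact h i
    _ = Fintype.card ι * c ^ 2 := by simp

section HolderGradient

variable {E : Type*} [NormedAddCommGroup E] [InnerProductSpace ℝ E] [CompleteSpace E]
  {r : E → ℝ} {r' : E → E} {M β : ℝ}

theorem abs_sub_sub_inner_le_of_holder_gradient (hβ : 0 ≤ β)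
    (hr : ∀ x, HasGradientAt r (r' x) x) (hrHold : ∀ x y, ‖r' y - r' x‖ ≤ M * ‖y - x‖ ^ β)
    (x v : E) : |r (x + v) - r x - ⟪r' x, v⟫| ≤ M / (β + 1) * ‖v‖ ^ (β + 1) := by
  have hderiv : ∀ t : ℝ, HasDerivAt (fun t => r (x + t • v) - r x - t * ⟪r' x, v⟫)
      ⟪r' (x + t • v) - r' x, v⟫ t := by
    intro t
    have hline : HasDerivAt (fun t : ℝ => x + t • v) v t := by
      simpa using ((hasDerivAt_id t).smul_const v).const_add x
    rw [inner_sub_left]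
    exact (((hr (x + t • v)).hasFDerivAt.comp_hasDerivAt t hline).sub_const (r x)).sub
      (hasDerivAt_mul_const _)
  have hbound : ∀ t : ℝ, HasDerivAt (fun t => M / (β + 1) * t ^ (β + 1) * ‖v‖ ^ (β + 1))
      (M * t ^ β * ‖v‖ ^ (β + 1)) t := by
    intro t
    refine (((Real.hasDerivAt_rpow_const (p := β + 1) (Or.inr (by linarith))).const_mul
      (M / (β + 1))).mul_const (‖v‖ ^ (β + 1))).congr_deriv ?_
    rw [add_sub_cancel_right]
    field_simp
  have hslope : ∀ t ∈ Ico (0 : ℝ) 1, ‖⟪r' (x + t • v) - r' x, v⟫‖ ≤ M * t ^ β * ‖v‖ ^ (β + 1) := by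
    rintro t ⟨ht, -⟩
    calc ‖⟪r' (x + t • v) - r' x, v⟫‖ ≤ ‖r' (x + t • v) - r' x‖ * ‖v‖ := norm_inner_le_norm _ _
      _ ≤ M * ‖t • v‖ ^ β * ‖v‖ := by
        gcongr
        simpa using hrHold x (x + t • v)
      _ = M * t ^ β * ‖v‖ ^ (β + 1) := by
        rw [norm_smul, Real.norm_of_nonneg ht, Real.mul_rpow ht (norm_nonneg v),
          Real.rpow_add_one' (norm_nonneg v) (by linarith)]
        ring
  have hfence := image_norm_le_of_norm_deriv_right_le_deriv_boundary
    (fun t _ => (hderiv t).continuousAt.continuousWithinAt) (fun t _ => (hderiv t).hasDerivWithinAt)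
    (by simp [Real.zero_rpow (by linarith : β + 1 ≠ 0)]) hbound hslope (right_mem_Icc.2 zero_le_one)
  simpa using hfence

theorem abs_slope_sub_inner_le_of_holder_gradient (hβ : 0 ≤ β)
    (hr : ∀ x, HasGradientAt r (r' x) x) (hrHold : ∀ x y, ‖r' y - r' x‖ ≤ M * ‖y - x‖ ^ β)
    (x u : E) (hu : ‖u‖ = 1) {lam : ℝ} (hlam : 0 < lam) :
    |(r (x + lam • u) - r x) / lam - ⟪r' x, u⟫| ≤ M / (β + 1) * lam ^ β := by
  have htaylor := abs_sub_sub_inner_le_of_holder_gradient hβ hr hrHold x (lam • u)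
  rw [norm_smul, hu, mul_one, Real.norm_of_nonneg hlam.le, real_inner_smul_right,
    Real.rpow_add_one' hlam.le (by linarith)] at htaylor
  have hsplit : (r (x + lam • u) - r x) / lam - ⟪r' x, u⟫
      = (r (x + lam • u) - r x - lam * ⟪r' x, u⟫) / lam := by
    field_simp
  rw [hsplit, abs_div, abs_of_pos hlam, div_le_iff₀ hlam]
  linarith

end HolderGradient

/-- Forward-difference gradient approximation error under Hölder gradients. -/
theorem forward_difference_error_holder {n : ℕ}
    (r : EuclideanSpace ℝ (Fin n) → ℝ)
    (r' : EuclideanSpace ℝ (Fin n) → EuclideanSpace ℝ (Fin n))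
    (M β : ℝ) (hM : 0 < M) (hβ : β ∈ Set.Ioc (0 : ℝ) 1)
    (hr : ∀ x, HasGradientAt r (r' x) x)
    (hrHold : ∀ x y, ‖r' y - r' x‖ ≤ M * ‖y - x‖ ^ β)
    (x : EuclideanSpace ℝ (Fin n)) (lam : ℝ) (hlam : 0 < lam) :
    ‖r' x - ((EuclideanSpace.equiv (Fin n) ℝ).symm fun i => (r (x + lam • EuclideanSpace.single i 1) - r x) / lam)‖ ≤ (Real.sqrt n * M / (β + 1)) * lam ^ β := by
  have hcoord : ∀ i, |(r' x - (EuclideanSpace.equiv (Fin n) ℝ).symm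
      fun i => (r (x + lam • EuclideanSpace.single i 1) - r x) / lam) i| ≤ M / (β + 1) * lam ^ β := by
    intro i
    have hslope := abs_slope_sub_inner_le_of_holder_gradient hβ.1.le hr hrHold x
      (EuclideanSpace.single i 1) (by simp) hlam
    rw [abs_sub_comm] at hslope
    simpa [EuclideanSpace.inner_single_right] using hslope
  have hβ1 : 0 < β + 1 := by linarith [hβ.1]
  calc _ ≤ √(Fintype.card (Fin n)) * (M / (β + 1) * lam ^ β) :=
        EuclideanSpace.norm_le_sqrt_card_mul_of_forall_abs_le (by positivity) hcoord
    _ = _ := by rw [Fintype.card_fin]; ring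
end

section
/- Let f = s + r with s having L-Lipschitz gradient and r having M-Hölder gradient of exponent β, and let g_f(x,λ) be the central-difference approximation with components (f(x+λe_i) - f(x-λe_i))/(2λ). Then ‖∇f(x) - g_f(x,λ)‖ ≤ (√n·L/2)·λ + (√n·M/(β+1))·λ^β. -/
/-!
Along each coordinate direction `e`, Taylor's formula with integral remainder gives
`|f (x ± λ e) - f x ∓ λ ⟪∇f x, e⟫| ≤ L λ² / 2 + M λ^(β+1) / (β+1)`, the Lipschitz part being
the Hölder estimate with exponent one. Subtracting the backward from the forward expansion and
dividing by `2λ` bounds each coordinate of the error by `L λ / 2 + M λ^β / (β+1)`, and a vector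
whose `n` coordinates are bounded by `c` has Euclidean norm at most `√n c`.
-/

open RealInnerProductSpace intervalIntegral

theorem continuous_of_norm_sub_le_mul_rpow {E F : Type*} [SeminormedAddCommGroup E]
    [SeminormedAddCommGroup F] {f : E → F} {C β : ℝ} (hβ : 0 < β)
    (hf : ∀ x y, ‖f y - f x‖ ≤ C * ‖y - x‖ ^ β) : Continuous f := by
  refine continuous_iff_continuousAt.2 fun a => tendsto_iff_norm_sub_tendsto_zero.2 ?_
  have hlim : Filter.Tendsto (fun y => C * ‖y - a‖ ^ β) (nhds a) (nhds 0) := by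
    have h := ((Real.continuousAt_rpow_const 0 β (Or.inr hβ.le)).tendsto.comp
      (tendsto_norm_sub_self a)).const_mul C
    rwa [Real.zero_rpow hβ.ne', mul_zero] at h
  exact squeeze_zero (fun _ => norm_nonneg _) (fun y => hf a y) hlim

section Gradient

variable {E : Type*} [NormedAddCommGroup E] [InnerProductSpace ℝ E] [CompleteSpace E]
  {f : E → ℝ} {f' : E → E}

theorem HasGradientAt.hasDerivAt_comp_add_smul {g x u : E} {t : ℝ}
    (hf : HasGradientAt f g (x + t • u)) :
    HasDerivAt (fun t : ℝ => f (x + t • u)) ⟪g, u⟫ t := by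
  have hline : HasDerivAt (fun t : ℝ => x + t • u) u t := by
    simpa using ((hasDerivAt_id t).smul_const u).const_add x
  have h := hf.hasFDerivAt.comp_hasDerivAt t hline
  simp only [InnerProductSpace.toDual_apply_apply] at h
  exact h

theorem sub_eq_integral_inner_of_hasGradientAt (hf : ∀ x, HasGradientAt f (f' x) x)
    (hf' : Continuous f') (x u : E) :
    f (x + u) - f x = ∫ t in (0 : ℝ)..1, ⟪f' (x + t • u), u⟫ := by
  have hcont : Continuous fun t : ℝ => ⟪f' (x + t • u), u⟫ := by fun_prop
  simpa using (integral_eq_sub_of_hasDerivAt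
    (fun t _ => (hf (x + t • u)).hasDerivAt_comp_add_smul)
    (hcont.intervalIntegrable 0 1)).symm

theorem abs_sub_sub_inner_le_of_holder {C β : ℝ} (hβ : 0 < β)
    (hf : ∀ x, HasGradientAt f (f' x) x) (hH : ∀ x y, ‖f' y - f' x‖ ≤ C * ‖y - x‖ ^ β)
    (x u : E) :
    |f (x + u) - f x - ⟪f' x, u⟫| ≤ C / (β + 1) * ‖u‖ ^ (β + 1) := by
  have hf' : Continuous f' := continuous_of_norm_sub_le_mul_rpow hβ hH
  have hcont : Continuous fun t : ℝ => ⟪f' (x + t • u), u⟫ := by fun_prop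
  have hrepr : f (x + u) - f x - ⟪f' x, u⟫
      = ∫ t in (0 : ℝ)..1, (⟪f' (x + t • u), u⟫ - ⟪f' x, u⟫) := by
    rw [integral_sub (hcont.intervalIntegrable 0 1) intervalIntegrable_const,
      sub_eq_integral_inner_of_hasGradientAt hf hf' x u, integral_const]
    simp
  have hpointwise : ∀ t ∈ Set.Ioc (0 : ℝ) 1,
      ‖⟪f' (x + t • u), u⟫ - ⟪f' x, u⟫‖ ≤ C * ‖u‖ ^ (β + 1) * t ^ β := by
    intro t ht
    calc ‖⟪f' (x + t • u), u⟫ - ⟪f' x, u⟫‖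
        = |⟪f' (x + t • u) - f' x, u⟫| := by rw [inner_sub_left, Real.norm_eq_abs]
      _ ≤ ‖f' (x + t • u) - f' x‖ * ‖u‖ := abs_real_inner_le_norm _ _
      _ ≤ C * ‖x + t • u - x‖ ^ β * ‖u‖ := by gcongr; exact hH _ _
      _ = C * ‖u‖ ^ (β + 1) * t ^ β := by
        rw [add_sub_cancel_left, norm_smul, Real.norm_of_nonneg ht.1.le,
          Real.mul_rpow ht.1.le (norm_nonneg u), Real.rpow_add_one' (norm_nonneg u) (by linarith)]
        ring
  rw [hrepr, ← Real.norm_eq_abs]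
  calc _ ≤ ∫ t in (0 : ℝ)..1, C * ‖u‖ ^ (β + 1) * t ^ β :=
        norm_integral_le_of_norm_le zero_le_one (Filter.Eventually.of_forall hpointwise)
          ((intervalIntegrable_rpow (Or.inl hβ.le)).const_mul _)
    _ = C / (β + 1) * ‖u‖ ^ (β + 1) := by
        rw [integral_const_mul, integral_rpow (Or.inl (by linarith)), Real.one_rpow,
          Real.zero_rpow (by linarith)]
        ring

theorem abs_sub_sub_inner_le_of_lipschitz {L : ℝ} (hf : ∀ x, HasGradientAt f (f' x) x)
    (hLip : ∀ x y, ‖f' y - f' x‖ ≤ L * ‖y - x‖) (x u : E) :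
    |f (x + u) - f x - ⟪f' x, u⟫| ≤ L / 2 * ‖u‖ ^ 2 := by
  have h := abs_sub_sub_inner_le_of_holder one_pos hf (by simpa using hLip) x u
  norm_num at h
  exact h

end Gradient

theorem abs_inner_sub_centralDifference_le {E : Type*} [NormedAddCommGroup E]
    [InnerProductSpace ℝ E] {F : E → ℝ} {G x e : E} {R : ℝ → ℝ}
    (hF : ∀ w, |F (x + w) - F x - ⟪G, w⟫| ≤ R ‖w‖) (he : ‖e‖ = 1) {lam : ℝ} (hlam : 0 < lam) :
    |⟪G, e⟫ - (F (x + lam • e) - F (x - lam • e)) / (2 * lam)| ≤ R lam / lam := by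
  have hnorm : ‖lam • e‖ = lam := by rw [norm_smul, he, Real.norm_of_nonneg hlam.le, mul_one]
  have hfwd := hF (lam • e)
  have hbwd := hF (-(lam • e))
  rw [hnorm, real_inner_smul_right] at hfwd
  rw [norm_neg, hnorm, ← sub_eq_add_neg, inner_neg_right, real_inner_smul_right] at hbwd
  have hdiff : |(F (x + lam • e) - F (x - lam • e)) - 2 * lam * ⟪G, e⟫| ≤ 2 * R lam :=
    calc _ = |(F (x + lam • e) - F x - lam * ⟪G, e⟫)
            - (F (x - lam • e) - F x - -(lam * ⟪G, e⟫))| := by ring_nf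
      _ ≤ 2 * R lam := (abs_sub _ _).trans (by linarith)
  rw [show ⟪G, e⟫ - (F (x + lam • e) - F (x - lam • e)) / (2 * lam)
      = -(((F (x + lam • e) - F (x - lam • e)) - 2 * lam * ⟪G, e⟫) / (2 * lam)) by
    field_simp; ring, abs_neg, abs_div, abs_of_pos (by positivity : 0 < 2 * lam),
    div_le_div_iff₀ (by positivity) hlam]
  nlinarith

theorem EuclideanSpace.norm_le_sqrt_card_mul {ι : Type*} [Fintype ι] (v : EuclideanSpace ℝ ι)
    {c : ℝ} (hv : ∀ i, ‖v i‖ ≤ c) : ‖v‖ ≤ √(Fintype.card ι) * c := by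
  rcases isEmpty_or_nonempty ι with hι | ⟨⟨i₀⟩⟩
  · simp [Subsingleton.elim v 0]
  have hc : 0 ≤ c := (norm_nonneg _).trans (hv i₀)
  rw [EuclideanSpace.norm_eq, ← Real.sqrt_sq hc, ← Real.sqrt_mul (Nat.cast_nonneg _)]
  gcongr
  calc ∑ i, ‖v i‖ ^ 2 ≤ ∑ _i : ι, c ^ 2 := by gcongr with i; exact hv i
    _ = _ := by simp

theorem central_difference_error_general {n : ℕ}
    (s r : EuclideanSpace ℝ (Fin n) → ℝ)
    (s' r' : EuclideanSpace ℝ (Fin n) → EuclideanSpace ℝ (Fin n))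
    (L M β : ℝ) (hβ : β ∈ Set.Ioc (0 : ℝ) 1)
    (hs : ∀ x, HasGradientAt s (s' x) x)
    (hr : ∀ x, HasGradientAt r (r' x) x)
    (hsLip : ∀ x y, ‖s' y - s' x‖ ≤ L * ‖y - x‖)
    (hrHold : ∀ x y, ‖r' y - r' x‖ ≤ M * ‖y - x‖ ^ β)
    (x : EuclideanSpace ℝ (Fin n)) (lam : ℝ) (hlam : 0 < lam) :
    ‖(s' x + r' x) -
      ((EuclideanSpace.equiv (Fin n) ℝ).symm fun i => ((s (x + lam • EuclideanSpace.single i 1) + r (x + lam • EuclideanSpace.single i 1))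
        - (s (x - lam • EuclideanSpace.single i 1) + r (x - lam • EuclideanSpace.single i 1)))
          / (2 * lam))‖
      ≤ (Real.sqrt n * L / 2) * lam + (Real.sqrt n * M / (β + 1)) * lam ^ β := by
  have htaylor : ∀ w, |(s (x + w) + r (x + w)) - (s x + r x) - ⟪s' x + r' x, w⟫|
      ≤ L / 2 * ‖w‖ ^ 2 + M / (β + 1) * ‖w‖ ^ (β + 1) := fun w =>
    calc _ = |(s (x + w) - s x - ⟪s' x, w⟫) + (r (x + w) - r x - ⟪r' x, w⟫)| := by
          rw [inner_add_left]; ring_nf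
      _ ≤ _ := (abs_add_le _ _).trans (add_le_add
          (abs_sub_sub_inner_le_of_lipschitz hs hsLip x w)
          (abs_sub_sub_inner_le_of_holder hβ.1 hr hrHold x w))
  refine (EuclideanSpace.norm_le_sqrt_card_mul _
    (c := (L / 2 * lam ^ 2 + M / (β + 1) * lam ^ (β + 1)) / lam) fun i => ?_).trans_eq ?_
  · simpa [EuclideanSpace.inner_single_right] using
      abs_inner_sub_centralDifference_le (F := fun y => s y + r y)
        (R := fun ρ => L / 2 * ρ ^ 2 + M / (β + 1) * ρ ^ (β + 1)) htaylor
        (e := EuclideanSpace.single i 1) (by simp) hlam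
  · rw [Fintype.card_fin, Real.rpow_add_one hlam.ne']
    field_simp

/-- Central-difference gradient approximation error for `f = s + r` with Lipschitz
plus Hölder gradient components. -/
theorem central_difference_error {n : ℕ}
    (s r : EuclideanSpace ℝ (Fin n) → ℝ)
    (s' r' : EuclideanSpace ℝ (Fin n) → EuclideanSpace ℝ (Fin n))
    (L M β : ℝ) (hL : 0 < L) (hM : 0 < M) (hβ : β ∈ Set.Ioc (0 : ℝ) 1)
    (hs : ∀ x, HasGradientAt s (s' x) x)
    (hr : ∀ x, HasGradientAt r (r' x) x)
    (hsLip : ∀ x y, ‖s' y - s' x‖ ≤ L * ‖y - x‖)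
    (hrHold : ∀ x y, ‖r' y - r' x‖ ≤ M * ‖y - x‖ ^ β)
    (x : EuclideanSpace ℝ (Fin n)) (lam : ℝ) (hlam : 0 < lam) :
    ‖(s' x + r' x) -
      ((EuclideanSpace.equiv (Fin n) ℝ).symm fun i => ((s (x + lam • EuclideanSpace.single i 1) + r (x + lam • EuclideanSpace.single i 1))
        - (s (x - lam • EuclideanSpace.single i 1) + r (x - lam • EuclideanSpace.single i 1)))
          / (2 * lam))‖
      ≤ (Real.sqrt n * L / 2) * lam + (Real.sqrt n * M / (β + 1)) * lam ^ β :=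
  central_difference_error_general s r s' r' L M β hβ hs hr hsLip hrHold x lam hlam
end

section
/- Let F = f + h with f differentiable satisfying the Hölder–Lipschitz descent inequality with constants L, M, β, and let g be a gradient approximation with ‖∇f(x) - g‖ ≤ λ√n L/2 + √n (M/(β+1)) λ^β, where 0 < λ ≤ ε/(σ√n). Let x̄ satisfy the subproblem descent inequality ⟨g, s⟩ + (1/2)⟨Bs, s⟩ + (σ/2)‖s‖² + h(x̄) ≤ h(x) with s = x̄ - x, ‖B‖ ≤ B̄, and suppose σ‖s‖ ≥ ε. Then F(x̄) ≤ F(x) - ((σ - 2L - B̄)/2)‖s‖² + ((n^{(1-β)/2} M + M)/(β+1))‖s‖^{β+1}. -/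
/-!
Write `s = x̄ - x`. The descent inequality bounds `f x̄` by `f x + ⟪∇f x, s⟫` plus the
Lipschitz and Hölder terms; split `⟪∇f x, s⟫ = ⟪g, s⟫ + ⟪∇f x - g, s⟫`, use the subproblem
inequality for `⟪g, s⟫` and `‖B‖ ≤ B̄` for the curvature term. The choice of `λ` together with
`σ‖s‖ ≥ ε` gives `√n λ ≤ ‖s‖`, so the gradient error times `‖s‖` is at most
`(L/2)‖s‖² + n^((1-β)/2) (M/(β+1)) ‖s‖^(β+1)`, because `√n λ^β = (√n)^(1-β) (√n λ)^β`.
-/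

open RealInnerProductSpace

theorem ContinuousLinearMap.neg_inner_apply_self_le {E : Type*} [NormedAddCommGroup E]
    [InnerProductSpace ℝ E] {B : E →L[ℝ] E} {b : ℝ} (hB : ‖B‖ ≤ b) (s : E) :
    -⟪B s, s⟫ ≤ b * ‖s‖ ^ 2 :=
  calc -⟪B s, s⟫ ≤ ‖B s‖ * ‖s‖ := (neg_le_abs _).trans (abs_real_inner_le_norm _ _)
    _ ≤ ‖B‖ * ‖s‖ * ‖s‖ := by gcongr; exact B.le_opNorm s
    _ ≤ b * ‖s‖ ^ 2 := by rw [mul_assoc, ← sq]; gcongr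

theorem Real.mul_rpow_le_of_mul_le {c t r β : ℝ} (hc : 0 ≤ c) (ht : 0 ≤ t) (hβ : 0 ≤ β)
    (h : c * t ≤ r) : c * t ^ β ≤ c ^ (1 - β) * r ^ β := by
  rcases hc.eq_or_lt with rfl | hc
  · have hr : 0 ≤ r := by simpa using h
    simp only [zero_mul]
    positivity
  calc c * t ^ β = c ^ (1 - β) * (c * t) ^ β := by
        rw [Real.mul_rpow hc.le ht, ← mul_assoc, ← Real.rpow_add hc, sub_add_cancel,
          Real.rpow_one]
    _ ≤ c ^ (1 - β) * r ^ β := by gcongr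

theorem inner_le_of_norm_le_of_mul_le {E : Type*} [NormedAddCommGroup E]
    [InnerProductSpace ℝ E] {e s : E} {c t L K β : ℝ} (hc : 0 ≤ c) (ht : 0 ≤ t)
    (hL : 0 ≤ L) (hK : 0 ≤ K) (hβ : 0 ≤ β) (hcts : c * t ≤ ‖s‖)
    (he : ‖e‖ ≤ t * c * L / 2 + c * K * t ^ β) :
    ⟪e, s⟫ ≤ L / 2 * ‖s‖ ^ 2 + c ^ (1 - β) * K * ‖s‖ ^ (β + 1) := by
  have hpow : ‖s‖ ^ (β + 1) = ‖s‖ ^ β * ‖s‖ := by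
    rw [Real.rpow_add' (norm_nonneg s) (by positivity), Real.rpow_one]
  have hlin : t * c * L / 2 * ‖s‖ ≤ L / 2 * ‖s‖ ^ 2 := by
    rw [sq, mul_comm t c]
    have := mul_le_mul_of_nonneg_right hcts (norm_nonneg s)
    nlinarith
  have hhol : c * K * t ^ β * ‖s‖ ≤ c ^ (1 - β) * K * ‖s‖ ^ (β + 1) := by
    rw [hpow]
    have := Real.mul_rpow_le_of_mul_le hc ht hβ hcts
    have hKs : 0 ≤ K * ‖s‖ := by positivity
    nlinarith
  calc ⟪e, s⟫ ≤ ‖e‖ * ‖s‖ := real_inner_le_norm e s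
    _ ≤ (t * c * L / 2 + c * K * t ^ β) * ‖s‖ := by gcongr
    _ ≤ _ := by linarith

theorem sufficient_descent_general {n : ℕ}
    (f h : EuclideanSpace ℝ (Fin n) → ℝ)
    (f' : EuclideanSpace ℝ (Fin n) → EuclideanSpace ℝ (Fin n))
    (L M β Bbar ε σ lam : ℝ)
    (hL : 0 < L) (hM : 0 < M) (hβ : β ∈ Set.Ioc (0 : ℝ) 1)
    (hσ : 1 ≤ σ)
    (hdesc : ∀ x y, f y ≤ f x + ⟪f' x, y - x⟫ + (L / 2) * ‖y - x‖ ^ 2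
      + (M / (β + 1)) * ‖y - x‖ ^ (β + 1))
    (x xbar : EuclideanSpace ℝ (Fin n)) (g : EuclideanSpace ℝ (Fin n))
    (B : EuclideanSpace ℝ (Fin n) →L[ℝ] EuclideanSpace ℝ (Fin n))
    (hBnorm : ‖B‖ ≤ Bbar)
    (hlam : 0 < lam) (hlamle : lam ≤ ε / (σ * Real.sqrt n))
    (hgerr : ‖f' x - g‖ ≤ lam * Real.sqrt n * L / 2 + Real.sqrt n * (M / (β + 1)) * lam ^ β)
    (hsub : ⟪g, xbar - x⟫ + (1 / 2 : ℝ) * ⟪B (xbar - x), xbar - x⟫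
      + (σ / 2) * ‖xbar - x‖ ^ 2 + h xbar ≤ h x)
    (hstep : ε ≤ σ * ‖xbar - x‖) :
    f xbar + h xbar ≤ f x + h x - ((σ - 2 * L - Bbar) / 2) * ‖xbar - x‖ ^ 2
      + (((n : ℝ) ^ ((1 - β) / 2) * M + M) / (β + 1)) * ‖xbar - x‖ ^ (β + 1) := by
  obtain ⟨hβ0, -⟩ := hβ
  have hσ0 : 0 < σ := by linarith
  have hsqrt_lam : √n * lam ≤ ‖xbar - x‖ := by
    rcases (Real.sqrt_nonneg n).eq_or_lt with hn | hn
    · rw [← hn, zero_mul]; exact norm_nonneg _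
    calc √n * lam ≤ √n * (ε / (σ * √n)) := by gcongr
      _ = ε / σ := by field_simp
      _ ≤ ‖xbar - x‖ := by rw [div_le_iff₀' hσ0]; exact hstep
  have hsqrt_rpow : √(n : ℝ) ^ (1 - β) = (n : ℝ) ^ ((1 - β) / 2) := by
    rw [Real.sqrt_eq_rpow, ← Real.rpow_mul n.cast_nonneg]
    ring_nf
  have herr := inner_le_of_norm_le_of_mul_le (s := xbar - x) (Real.sqrt_nonneg n) hlam.le
    hL.le (by positivity) hβ0.le hsqrt_lam hgerr
  rw [inner_sub_left, hsqrt_rpow] at herr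
  have hB := B.neg_inner_apply_self_le hBnorm (xbar - x)
  have hf := hdesc x xbar
  linear_combination hf + herr + hsub + hB / 2

/-- Sufficient-descent lemma (Lemma 3 of the paper): under the mixed
Lipschitz–Hölder descent inequality, the gradient-approximation error bound,
the subproblem inequality, and `σ‖s‖ ≥ ε`, one obtains the quantified decrease
of `F = f + h`. -/
theorem sufficient_descent {n : ℕ}
    (f h : EuclideanSpace ℝ (Fin n) → ℝ)
    (f' : EuclideanSpace ℝ (Fin n) → EuclideanSpace ℝ (Fin n))
    (L M β Bbar ε σ lam : ℝ)
    (hL : 0 < L) (hM : 0 < M) (hβ : β ∈ Set.Ioc (0 : ℝ) 1) (hBbar : 0 ≤ Bbar)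
    (hε : ε ∈ Set.Ioo (0 : ℝ) 1) (hσ : 1 ≤ σ)
    (hdesc : ∀ x y, f y ≤ f x + ⟪f' x, y - x⟫ + (L / 2) * ‖y - x‖ ^ 2
      + (M / (β + 1)) * ‖y - x‖ ^ (β + 1))
    (x xbar : EuclideanSpace ℝ (Fin n)) (g : EuclideanSpace ℝ (Fin n))
    (B : EuclideanSpace ℝ (Fin n) →L[ℝ] EuclideanSpace ℝ (Fin n))
    (hBnorm : ‖B‖ ≤ Bbar)
    (hlam : 0 < lam) (hlamle : lam ≤ ε / (σ * Real.sqrt n))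
    (hgerr : ‖f' x - g‖ ≤ lam * Real.sqrt n * L / 2 + Real.sqrt n * (M / (β + 1)) * lam ^ β)
    (hsub : ⟪g, xbar - x⟫ + (1 / 2 : ℝ) * ⟪B (xbar - x), xbar - x⟫
      + (σ / 2) * ‖xbar - x‖ ^ 2 + h xbar ≤ h x)
    (hstep : ε ≤ σ * ‖xbar - x‖) :
    f xbar + h xbar ≤ f x + h x - ((σ - 2 * L - Bbar) / 2) * ‖xbar - x‖ ^ 2
      + (((n : ℝ) ^ ((1 - β) / 2) * M + M) / (β + 1)) * ‖xbar - x‖ ^ (β + 1) :=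
  sufficient_descent_general f h f' L M β Bbar ε σ lam hL hM hβ hσ hdesc x xbar g B hBnorm hlam
    hlamle hgerr hsub hstep
end
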